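/- Consider the generalized UCB policy with increasing exploration functions f_1,…,f_K. If f_k(n) = o(n) for every k∈{1,…,K}, and there exist γ>1/2 and N≥1 such that f_k(n) ≥ γ·log log n for every k and every n≥N, then the generalized UCB policy is Hannan consistent: E_θ[R_n] = o(n) for every environment θ∈Θ. -/

import Mathlib

open MeasureTheory ProbabilityTheory Filter Asymptotics

noncomputable section

namespace Bandit

/-- Empirical mean of the first `s` values of the sequence `x`. -/
def empMean (x : ℕ → ℝ) (s : ℕ) : ℝ := (∑ u ∈ Finset.range s, x u) / s

/-- An element of `Fin K` maximizing `g`. -/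
def argmaxFin {K : ℕ} (hK : 0 < K) (g : Fin K → ℝ) : Fin K :=
  (Finset.univ.exists_max_image g ⟨⟨0, hK⟩, Finset.mem_univ _⟩).choose

theorem argmaxFin_spec {K : ℕ} (hK : 0 < K) (g : Fin K → ℝ) (j : Fin K) :
    g j ≤ g (argmaxFin hK g) := by
  have h := (Finset.univ.exists_max_image g ⟨⟨0, hK⟩, Finset.mem_univ _⟩).choose_spec
  exact h.2 j (Finset.mem_univ j)

/-- The arm pulled at round `t` by a generalized UCB policy with exploration functions `f`,
given the reward table `x` (where `x k u` is the reward of the `(u+1)`-th pull of arm `k`)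
and the vector `T` of numbers of pulls of each arm before round `t`.
During the first `K` rounds (`t ≤ K`), each arm is pulled once; afterwards an arm maximizing
the UCB index `X̂_{k,T_k(t-1)} + √(f_k(t) / T_k(t-1))` is pulled. -/
def ucbArmAux {K : ℕ} (hK : 0 < K) (f : Fin K → ℕ → ℝ) (x : Fin K → ℕ → ℝ)
    (T : Fin K → ℕ) (t : ℕ) : Fin K :=
  if h : t ≤ K then ⟨t - 1, by omega⟩
  else argmaxFin hK fun j => empMean (x j) (T j) + Real.sqrt (f j t / (T j : ℝ))

/-- `ucbCount hK f x t k` is `T_k(t)`, the number of pulls of arm `k` during rounds `1,…,t`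
by the generalized UCB policy with exploration functions `f` on the reward table `x`. -/
def ucbCount {K : ℕ} (hK : 0 < K) (f : Fin K → ℕ → ℝ) (x : Fin K → ℕ → ℝ) :
    ℕ → Fin K → ℕ
  | 0, _ => 0
  | t + 1, k =>
    ucbCount hK f x t k + if ucbArmAux hK f x (ucbCount hK f x t) (t + 1) = k then 1 else 0

/-- The arm pulled at round `t ≥ 1` by the generalized UCB policy. -/
def ucbArm {K : ℕ} (hK : 0 < K) (f : Fin K → ℕ → ℝ) (x : Fin K → ℕ → ℝ) (t : ℕ) : Fin K :=
  ucbArmAux hK f x (ucbCount hK f x (t - 1)) t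

/-- The exploration function of the UCB(ρ) policy: `f_k(t) = ρ log t` for every arm. -/
def rhoLog {K : ℕ} (ρ : ℝ) : Fin K → ℕ → ℝ := fun _ t => ρ * Real.log t

/-- The reward table of the two-armed deterministic environment `θ = (δ_a, δ_b)`:
arm `0` always gives `a` and arm `1` always gives `b`. -/
def diracTable (a b : ℝ) : Fin 2 → ℕ → ℝ := fun k _ => if k = 0 then a else b

end Bandit
namespace Bandit

/-- `ν` is a valid bandit environment: each arm's reward distribution is a probability
measure on `[0,1]`. -/
def IsEnv {K : ℕ} (ν : Fin K → Measure ℝ) : Prop :=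
  ∀ k, IsProbabilityMeasure (ν k) ∧ ν k (Set.Icc 0 1) = 1

/-- The mean of a reward distribution. -/
def mean (ν : Measure ℝ) : ℝ := ∫ x, x ∂ν

/-- `μ* = max_k μ_k`, the best mean reward of the environment `ν`. -/
def bestMean {K : ℕ} (hK : 0 < K) (ν : Fin K → Measure ℝ) : ℝ :=
  Finset.univ.sup' ⟨⟨0, hK⟩, Finset.mem_univ _⟩ fun k => mean (ν k)

/-- `Δ_k = μ* - μ_k`, the optimality gap of arm `k` in the environment `ν`. -/
def gap {K : ℕ} (hK : 0 < K) (ν : Fin K → Measure ℝ) (k : Fin K) : ℝ :=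
  bestMean hK ν - mean (ν k)

/-- `X` is a reward table process on `(Ω, P)` for the environment `ν`: the random variables
`X k u` (the reward of the `(u+1)`-th pull of arm `k`) are mutually independent, take values
in `[0,1]`, and `X k u` has distribution `ν k` for every `u`. -/
def IsRewardTable {K : ℕ} {Ω : Type*} [MeasurableSpace Ω] (P : Measure Ω)
    (ν : Fin K → Measure ℝ) (X : Fin K → ℕ → Ω → ℝ) : Prop :=
  (∀ k u, Measurable (X k u)) ∧
  (∀ k u ω, X k u ω ∈ Set.Icc (0 : ℝ) 1) ∧
  (∀ k u, Measure.map (X k u) P = ν k) ∧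
  iIndepFun (fun p : Fin K × ℕ => X p.1 p.2) P

/-- `E_θ[T_k(n)]`, the expected number of pulls of arm `k` up to round `n`, for the
generalized UCB policy with exploration functions `f`. -/
def ucbExpCount {K : ℕ} (hK : 0 < K) (f : Fin K → ℕ → ℝ) {Ω : Type*} [MeasurableSpace Ω]
    (P : Measure Ω) (X : Fin K → ℕ → Ω → ℝ) (n : ℕ) (k : Fin K) : ℝ :=
  ∫ ω, (ucbCount hK f (fun j u => X j u ω) n k : ℝ) ∂P

/-- `E_θ[R_n] = ∑_k Δ_k E_θ[T_k(n)]`, the expected regret at horizon `n` of the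
generalized UCB policy with exploration functions `f` in the environment `ν`. -/
def ucbRegret {K : ℕ} (hK : 0 < K) (f : Fin K → ℕ → ℝ) {Ω : Type*} [MeasurableSpace Ω]
    (P : Measure Ω) (ν : Fin K → Measure ℝ) (X : Fin K → ℕ → Ω → ℝ) (n : ℕ) : ℝ :=
  ∑ k, gap hK ν k * ucbExpCount hK f P X n k

end Bandit
namespace Bandit

/-- The family `Θ_k` of sets of admissible reward distributions per arm, as in the paper:
each `Θ_k` consists of probability measures on `[0,1]` and contains every two-point
distribution `p δ_a + (1-p) δ_b` with `p, a, b ∈ [0,1]`. -/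
def Admissible {K : ℕ} (Θk : Fin K → Set (Measure ℝ)) : Prop :=
  (∀ k, ∀ ν ∈ Θk k, IsProbabilityMeasure ν ∧ ν (Set.Icc 0 1) = 1) ∧
  (∀ k, ∀ p a b : ℝ, p ∈ Set.Icc (0 : ℝ) 1 → a ∈ Set.Icc (0 : ℝ) 1 → b ∈ Set.Icc (0 : ℝ) 1 →
    ENNReal.ofReal p • Measure.dirac a + ENNReal.ofReal (1 - p) • Measure.dirac b ∈ Θk k)

/-- `Θ = Θ_1 × … × Θ_K`, the set of admissible environments. -/
def envSet {K : ℕ} (Θk : Fin K → Set (Measure ℝ)) : Set (Fin K → Measure ℝ) :=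
  {θ | ∀ k, θ k ∈ Θk k}

end Bandit
namespace Bandit

/-!
Fix a suboptimal arm `k`, an arm `k⋆` with larger mean, and `a < b` strictly between their
means. By the strong law of large numbers, almost surely there is an `m` such that from `m`
samples on the empirical mean of `k` stays below `a` and that of `k⋆` above `b`. Since
`f_{k⋆} ≥ γ log log n → ∞`, after some round `t₁(m)` the exploration bonus keeps the index of
`k⋆` above `b` even while `k⋆` has fewer than `m` samples, so `k` is pulled only while
`√(f_k(t) / T_k) ≥ b - a`. On that event `T_k(n) ≤ t₁(m) + m + |f_k(n)| / (b - a)² + 1 = o(n)`;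
since `T_k(n) ≤ n` and the event has probability tending to one as `m → ∞`, `E[T_k(n)] = o(n)`.
-/

open Topology

section EmpiricalMean

variable {y : ℕ → ℝ} {m s : ℕ}

lemma empMean_nonneg (hy : ∀ u, 0 ≤ y u) (s : ℕ) : 0 ≤ empMean y s :=
  div_nonneg (Finset.sum_nonneg fun u _ => hy u) s.cast_nonneg

lemma le_empMean_add_sqrt (hy : ∀ u, 0 ≤ y u) {b φ : ℝ} (hb : b ≤ 1)
    (hm : ∀ s ≥ m, b ≤ empMean y s) (hs : 1 ≤ s) (hφ : (m : ℝ) ≤ φ) :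
    b ≤ empMean y s + √(φ / s) := by
  rcases le_or_gt m s with hms | hsm
  · linarith [hm s hms, Real.sqrt_nonneg (φ / s)]
  · have hs' : (0 : ℝ) < s := by exact_mod_cast hs
    have hsφ : (s : ℝ) ≤ φ := le_trans (by exact_mod_cast hsm.le) hφ
    have hbonus : 1 ≤ √(φ / s) := Real.one_le_sqrt.2 ((one_le_div hs').2 hsφ)
    linarith [empMean_nonneg hy s]

lemma le_or_le_div_of_le_empMean_add_sqrt {a b φ : ℝ} (hab : a < b)
    (hm : ∀ s ≥ m, empMean y s ≤ a) (hs : 0 < s) (h : b ≤ empMean y s + √(φ / s)) :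
    (s : ℝ) ≤ m ∨ (s : ℝ) ≤ φ / (b - a) ^ 2 := by
  rcases le_or_gt m s with hms | hsm
  · right
    have hφs : (b - a) ^ 2 ≤ φ / s := (Real.le_sqrt' (by linarith)).1 (by linarith [hm s hms])
    rw [le_div_iff₀ (by positivity)]
    rw [le_div_iff₀ (by exact_mod_cast hs)] at hφs
    linarith
  · left
    exact_mod_cast hsm.le

end EmpiricalMean

section UCB

variable {K : ℕ} (hK : 0 < K) (f : Fin K → ℕ → ℝ) (x : Fin K → ℕ → ℝ)

def ucbIndex (T : Fin K → ℕ) (t : ℕ) (j : Fin K) : ℝ :=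
  empMean (x j) (T j) + √(f j t / T j)

lemma ucbCount_succ (t : ℕ) (k : Fin K) :
    ucbCount hK f x (t + 1) k = ucbCount hK f x t k + if ucbArm hK f x (t + 1) = k then 1 else 0 :=
  rfl

lemma ucbCount_le (t : ℕ) (k : Fin K) : ucbCount hK f x t k ≤ t := by
  induction t with
  | zero => rfl
  | succ t ih => rw [ucbCount_succ]; split <;> omega

lemma ucbCount_mono (k : Fin K) : Monotone fun t => ucbCount hK f x t k :=
  monotone_nat_of_le_succ fun t => by rw [ucbCount_succ]; omega

lemma ucbArm_of_le {t : ℕ} (ht : t ≤ K) : ucbArm hK f x t = ⟨t - 1, by omega⟩ :=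
  dif_pos ht

lemma one_le_ucbCount {t : ℕ} (k : Fin K) (ht : K ≤ t) : 1 ≤ ucbCount hK f x t k := by
  have hpull : ucbArm hK f x (k + 1) = k := by
    rw [ucbArm_of_le hK f x k.isLt]
    rfl
  calc 1 ≤ ucbCount hK f x (k + 1) k := by rw [ucbCount_succ, if_pos hpull]; omega
    _ ≤ ucbCount hK f x t k := ucbCount_mono hK f x k (by omega)

lemma ucbIndex_le_of_ucbArm_eq {t : ℕ} {k : Fin K} (ht : K ≤ t)
    (hpull : ucbArm hK f x (t + 1) = k) (j : Fin K) :
    ucbIndex f x (ucbCount hK f x t) (t + 1) j ≤ ucbIndex f x (ucbCount hK f x t) (t + 1) k := by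
  rw [ucbArm, Nat.add_sub_cancel, ucbArmAux, dif_neg (by omega)] at hpull
  subst hpull
  exact argmaxFin_spec hK (ucbIndex f x (ucbCount hK f x t) (t + 1)) j

lemma ucbCount_le_add_one {k : Fin K} {B : ℝ} (hB : 0 ≤ B) {n : ℕ}
    (h : ∀ t < n, ucbArm hK f x (t + 1) = k → (ucbCount hK f x t k : ℝ) ≤ B) :
    (ucbCount hK f x n k : ℝ) ≤ B + 1 := by
  induction n with
  | zero => show ((0 : ℕ) : ℝ) ≤ B + 1; push_cast; linarith
  | succ n ih =>
    rw [ucbCount_succ]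
    split_ifs with hpull
    · push_cast
      linarith [h n n.lt_succ_self hpull]
    · simpa using ih fun t ht => h t (Nat.lt_succ_of_lt ht)

lemma ucbCount_le_of_empMean_le {k kstar : Fin K} {a b : ℝ} {m t₁ : ℕ} (hab : a < b)
    (hb : b ≤ 1) (hx : ∀ u, 0 ≤ x kstar u) (hk : ∀ s ≥ m, empMean (x k) s ≤ a)
    (hkstar : ∀ s ≥ m, b ≤ empMean (x kstar) s) (hKt₁ : K ≤ t₁)
    (ht₁ : ∀ t ≥ t₁, (m : ℝ) ≤ f kstar t) (hfk : Monotone (f k)) (n : ℕ) :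
    (ucbCount hK f x n k : ℝ) ≤ t₁ + m + |f k n| / (b - a) ^ 2 + 1 := by
  have hbonus : 0 ≤ |f k n| / (b - a) ^ 2 := by positivity
  refine ucbCount_le_add_one hK f x (by positivity) fun t htn hpull => ?_
  rcases lt_or_ge t t₁ with ht | ht
  · have : (ucbCount hK f x t k : ℝ) ≤ t₁ := by
      exact_mod_cast (ucbCount_le hK f x t k).trans ht.le
    linarith [m.cast_nonneg (α := ℝ)]
  · have hKt : K ≤ t := hKt₁.trans ht
    have hindex : b ≤ ucbIndex f x (ucbCount hK f x t) (t + 1) k :=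
      (le_empMean_add_sqrt hx hb hkstar (one_le_ucbCount hK f x kstar hKt)
        (ht₁ (t + 1) (by omega))).trans (ucbIndex_le_of_ucbArm_eq hK f x hKt hpull kstar)
    have hfkn : f k (t + 1) / (b - a) ^ 2 ≤ |f k n| / (b - a) ^ 2 := by
      gcongr
      exact (hfk htn).trans (le_abs_self _)
    rcases le_or_le_div_of_le_empMean_add_sqrt hab hk (one_le_ucbCount hK f x k hKt) hindex
      with h | h <;> linarith [t₁.cast_nonneg (α := ℝ)]

end UCB

section Integral

variable {Ω : Type*} [MeasurableSpace Ω] {P : Measure Ω} [IsProbabilityMeasure P]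

-- `F` need not be integrable, nor even measurable: the UCB policy breaks ties by choice.
lemma integral_le_add_mul_measureReal_compl {F : Ω → ℝ} {G : Set Ω} (hG : MeasurableSet G)
    {B c : ℝ} (hB : 0 ≤ B) (hF0 : ∀ ω, 0 ≤ F ω) (hFc : ∀ ω, F ω ≤ c)
    (hFB : ∀ ω ∈ G, F ω ≤ B) : ∫ ω, F ω ∂P ≤ B + c * P.real Gᶜ := by
  have hle : ∀ ω, F ω ≤ B + Gᶜ.indicator (fun _ => c) ω := by
    intro ω
    by_cases hω : ω ∈ G
    · simpa [hω] using hFB ω hω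
    · simpa [hω] using (hFc ω).trans (le_add_of_nonneg_left hB)
  calc ∫ ω, F ω ∂P ≤ ∫ ω, B + Gᶜ.indicator (fun _ => c) ω ∂P :=
        integral_mono_of_nonneg (.of_forall hF0)
          ((integrable_const B).add ((integrable_const c).indicator hG.compl)) (.of_forall hle)
    _ = B + c * P.real Gᶜ := by
        rw [integral_add (integrable_const B) ((integrable_const c).indicator hG.compl),
          integral_indicator_const c hG.compl]
        simp [mul_comm]

lemma tendsto_measureReal_compl_of_ae_exists_mem {G : ℕ → Set Ω} (hG : ∀ m, MeasurableSet (G m))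
    (hGmono : Monotone G) (hGae : ∀ᵐ ω ∂P, ∃ m, ω ∈ G m) :
    Tendsto (fun m => P.real (G m)ᶜ) atTop (𝓝 0) := by
  have hlim := tendsto_measure_iInter_atTop (μ := P) (fun m => (hG m).compl.nullMeasurableSet)
    (fun _ _ hij => Set.compl_subset_compl.2 (hGmono hij)) ⟨0, measure_ne_top _ _⟩
  have hnull : P (⋂ m, (G m)ᶜ) = 0 :=
    measure_mono_null (fun ω hω => by simpa using hω) (ae_iff.1 hGae)
  rw [hnull] at hlim
  exact (ENNReal.tendsto_toReal ENNReal.zero_ne_top).comp hlim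

lemma isLittleO_integral_of_le {F : ℕ → Ω → ℝ} {G : ℕ → Set Ω} {B : ℕ → ℕ → ℝ}
    (hF0 : ∀ n ω, 0 ≤ F n ω) (hFn : ∀ n ω, F n ω ≤ n)
    (hG : ∀ m, MeasurableSet (G m)) (hGmono : Monotone G) (hGae : ∀ᵐ ω ∂P, ∃ m, ω ∈ G m)
    (hB0 : ∀ m n, 0 ≤ B m n) (hB : ∀ m, (B m ·) =o[atTop] fun n => (n : ℝ))
    (hFB : ∀ m n, ∀ ω ∈ G m, F n ω ≤ B m n) :
    (fun n => ∫ ω, F n ω ∂P) =o[atTop] fun n => (n : ℝ) := by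
  refine isLittleO_iff.2 fun ε hε => ?_
  obtain ⟨m, hm⟩ := ((tendsto_measureReal_compl_of_ae_exists_mem hG hGmono hGae).eventually
    (gt_mem_nhds (half_pos hε))).exists
  filter_upwards [isLittleO_iff.1 (hB m) (half_pos hε)] with n hn
  have hint := integral_le_add_mul_measureReal_compl (P := P) (hG m) (hB0 m n) (hF0 n) (hFn n)
    (hFB m n)
  rw [Real.norm_of_nonneg (integral_nonneg (hF0 n)), Real.norm_of_nonneg n.cast_nonneg]
  rw [Real.norm_of_nonneg (hB0 m n), Real.norm_of_nonneg n.cast_nonneg] at hn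
  nlinarith [n.cast_nonneg (α := ℝ)]

end Integral

namespace IsRewardTable

variable {K : ℕ} {Ω : Type*} [MeasurableSpace Ω] {P : Measure Ω} {ν : Fin K → Measure ℝ}
  {X : Fin K → ℕ → Ω → ℝ}

lemma integral_eq_mean (hT : IsRewardTable P ν X) (k : Fin K) (u : ℕ) :
    ∫ ω, X k u ω ∂P = mean (ν k) := by
  rw [mean, ← hT.2.2.1 k u]
  exact (integral_map (hT.1 k u).aemeasurable aestronglyMeasurable_id).symm

lemma integrable (hT : IsRewardTable P ν X) [IsFiniteMeasure P] (k : Fin K) (u : ℕ) :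
    Integrable (X k u) P :=
  (integrable_const (1 : ℝ)).mono' (hT.1 k u).aestronglyMeasurable
    (.of_forall fun ω => abs_le.2 ⟨by linarith [(hT.2.1 k u ω).1], (hT.2.1 k u ω).2⟩)

lemma mean_le_one (hT : IsRewardTable P ν X) [IsProbabilityMeasure P] (k : Fin K) :
    mean (ν k) ≤ 1 := by
  rw [← hT.integral_eq_mean k 0]
  simpa using integral_mono (hT.integrable k 0) (integrable_const 1) fun ω => (hT.2.1 k 0 ω).2

lemma measurable_empMean (hT : IsRewardTable P ν X) (k : Fin K) (s : ℕ) :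
    Measurable fun ω => empMean (fun u => X k u ω) s :=
  (Finset.measurable_sum _ fun u _ => hT.1 k u).div_const _

lemma ae_tendsto_empMean (hT : IsRewardTable P ν X) [IsProbabilityMeasure P] (k : Fin K) :
    ∀ᵐ ω ∂P, Tendsto (fun s => empMean (fun u => X k u ω) s) atTop (𝓝 (mean (ν k))) := by
  rw [← hT.integral_eq_mean k 0]
  refine strong_law_ae_real (fun u => X k u) (hT.integrable k 0) ?_ fun u =>
    ⟨(hT.1 k u).aemeasurable, (hT.1 k 0).aemeasurable, by rw [hT.2.2.1, hT.2.2.1]⟩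
  exact fun u v huv => hT.2.2.2.indepFun (i := (k, u)) (j := (k, v)) (by simp [huv])

end IsRewardTable

lemma isLittleO_ucbExpCount {K : ℕ} (hK : 0 < K) (f : Fin K → ℕ → ℝ) {Ω : Type*}
    [MeasurableSpace Ω] {P : Measure Ω} [IsProbabilityMeasure P] {ν : Fin K → Measure ℝ}
    {X : Fin K → ℕ → Ω → ℝ} (hT : IsRewardTable P ν X) {k kstar : Fin K}
    (hlt : mean (ν k) < mean (ν kstar)) (hfk : Monotone (f k))
    (hfo : (fun n : ℕ => f k n) =o[atTop] fun n => (n : ℝ))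
    (hftop : Tendsto (f kstar) atTop atTop) :
    (fun n => ucbExpCount hK f P X n k) =o[atTop] fun n => (n : ℝ) := by
  obtain ⟨a, hka, hab'⟩ := exists_between hlt
  obtain ⟨b, hab, hbs⟩ := exists_between hab'
  have ht₁ (m : ℕ) : ∃ t₁ ≥ K, ∀ t ≥ t₁, (m : ℝ) ≤ f kstar t := by
    obtain ⟨t, ht⟩ := eventually_atTop.1 (hftop.eventually_ge_atTop (m : ℝ))
    exact ⟨max K t, le_max_left _ _, fun t' h => ht t' (le_of_max_le_right h)⟩
  choose t₁ hKt₁ ht₁ using ht₁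
  have hconst (c : ℝ) : (fun _ : ℕ => c) =o[atTop] fun n => (n : ℝ) :=
    (isLittleO_const_id_atTop c).comp_tendsto tendsto_natCast_atTop_atTop
  refine isLittleO_integral_of_le (F := fun n ω => ucbCount hK f (fun j u => X j u ω) n k)
    (G := fun m => {ω | ∀ s ≥ m,
      empMean (fun u => X k u ω) s ≤ a ∧ b ≤ empMean (fun u => X kstar u ω) s})
    (B := fun m n => t₁ m + m + |f k n| / (b - a) ^ 2 + 1)
    (fun n ω => Nat.cast_nonneg _) (fun n ω => by exact_mod_cast ucbCount_le ..)
    (fun m => ?_) (fun m m' h ω hω s hs => hω s (h.trans hs)) ?_ (fun m n => by positivity)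
    (fun m => ?_) (fun m n ω hω => ?_)
  · simp only [Set.ofPred_forall]
    exact .iInter fun s => .iInter fun _ => (measurableSet_le (hT.measurable_empMean k s)
      measurable_const).inter (measurableSet_le measurable_const (hT.measurable_empMean kstar s))
  · filter_upwards [hT.ae_tendsto_empMean k, hT.ae_tendsto_empMean kstar] with ω hk hkstar
    exact eventually_atTop.1
      ((hk.eventually (ge_mem_nhds hka)).and (hkstar.eventually (le_mem_nhds hbs)))
  · refine ((hconst _).add ?_).add (hconst 1)
    exact (hfo.norm_left.const_mul_left ((b - a) ^ 2)⁻¹).congr_left fun n => inv_mul_eq_div _ _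
  · exact ucbCount_le_of_empMean_le hK f _ hab (hbs.le.trans (hT.mean_le_one kstar))
      (fun u => (hT.2.1 kstar u ω).1) (fun s hs => (hω s hs).1) (fun s hs => (hω s hs).2)
      (hKt₁ m) (ht₁ m) hfk n

theorem generalized_ucb_hannan_consistent_general
    (K : ℕ) (hK : 0 < K)
    (Θk : Fin K → Set (Measure ℝ))
    (f : Fin K → ℕ → ℝ) (hf : ∀ k, Monotone (f k))
    (hfo : ∀ k, (fun n : ℕ => f k n) =o[Filter.atTop] fun n : ℕ => (n : ℝ))
    (γ : ℝ) (hγ : 1 / 2 < γ) (N : ℕ)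
    (hflow : ∀ k, ∀ n ≥ N, γ * Real.log (Real.log n) ≤ f k n) :
    ∀ θ ∈ envSet Θk,
      ∀ (Ω : Type) (_ : MeasurableSpace Ω) (P : Measure Ω)
        (X : Fin K → ℕ → Ω → ℝ), IsProbabilityMeasure P → IsRewardTable P θ X →
        (fun n : ℕ => ucbRegret hK f P θ X n) =o[Filter.atTop] fun n : ℕ => (n : ℝ) := by
  intro θ _ Ω _ P X _ hT
  have hftop (j : Fin K) : Tendsto (f j) atTop atTop :=
    tendsto_atTop_mono' atTop (eventually_atTop.2 ⟨N, hflow j⟩)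
      ((Real.tendsto_log_atTop.comp (Real.tendsto_log_atTop.comp
        tendsto_natCast_atTop_atTop)).const_mul_atTop (by linarith))
  refine IsLittleO.fun_sum fun k _ => ?_
  rcases (Finset.le_sup' (fun j => mean (θ j)) (Finset.mem_univ k)).eq_or_lt with hk | hk
  · simp [gap, bestMean, ← hk]
  · obtain ⟨kstar, -, hkstar⟩ := (Finset.lt_sup'_iff _).1 hk
    exact (isLittleO_ucbExpCount hK f hT hkstar (hf k) (hfo k) (hftop kstar)).const_mul_left _

/-- If f_k(n) = o(n) for every k and there exist γ > 1/2 and N ≥ 1 with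
f_k(n) ≥ γ log log n for every k and n ≥ N, then the generalized UCB policy with increasing
exploration functions f_1, …, f_K is Hannan consistent: E_θ[R_n] = o(n) for every θ ∈ Θ. -/
theorem generalized_ucb_hannan_consistent
    (K : ℕ) (hK : 0 < K) (hK2 : 2 ≤ K)
    (Θk : Fin K → Set (Measure ℝ)) (hΘ : Admissible Θk)
    (f : Fin K → ℕ → ℝ) (hf : ∀ k, Monotone (f k))
    (hfo : ∀ k, (fun n : ℕ => f k n) =o[Filter.atTop] fun n : ℕ => (n : ℝ))
    (γ : ℝ) (hγ : 1 / 2 < γ) (N : ℕ) (hN : 1 ≤ N)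
    (hflow : ∀ k, ∀ n ≥ N, γ * Real.log (Real.log n) ≤ f k n) :
    ∀ θ ∈ envSet Θk,
      ∀ (Ω : Type) (_ : MeasurableSpace Ω) (P : Measure Ω)
        (X : Fin K → ℕ → Ω → ℝ), IsProbabilityMeasure P → IsRewardTable P θ X →
        (fun n : ℕ => ucbRegret hK f P θ X n) =o[Filter.atTop] fun n : ℕ => (n : ℝ) :=
  generalized_ucb_hannan_consistent_general K hK Θk f hf hfo γ hγ N hflow

end Bandit
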